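/- arXiv:2503.10169 — 2 statements merged into one kernel-verified Lean document; each statement's English description precedes it below -/
import Mathlib

section
/- For every n ≥ 2, the number of leaf-ordered rooted binary trees on n leaves (rooted trees in which every internal node has exactly two children and the leaves are bijectively labeled 0, 1, ..., n−1) equals the double factorial (2n−3)!! = ∏_{i=1}^{n−1} (2i − 1). -/
/-- A rooted binary tree whose leaves carry natural-number labels. -/
inductive BTree : Type
  | leaf : ℕ → BTree
  | node : BTree → BTree → BTree
  deriving DecidableEq

namespace BTree

/-- The minimum leaf label in a tree (the "clade-founder" label of its root). -/
def minLeaf : BTree → ℕ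
  | leaf j => j
  | node l r => min (minLeaf l) (minLeaf r)

/-- The label of the root node of a subtree: a leaf carries its own label,
and an internal node carries its canonical label `-CS`, where `CS` is the
"clade-splitter" label, i.e. the maximum of the children's clade-founder labels. -/
def nodeLabel : BTree → ℤ
  | leaf j => (j : ℤ)
  | node l r => -(max (minLeaf l) (minLeaf r) : ℤ)

/-- The multiset of leaf labels of a tree. -/
def leafMultiset : BTree → Multiset ℕ
  | leaf j => {j}
  | node l r => leafMultiset l + leafMultiset r

/-- Canonical form for representing an *unordered* tree by an ordered one:
at each internal node the left subtree contains the smaller minimum leaf label. -/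
def Canonical : BTree → Prop
  | leaf _ => True
  | node l r => minLeaf l < minLeaf r ∧ Canonical l ∧ Canonical r

/-- `IsRBT n T` : `T` is (the canonical representative of) a leaf-ordered rooted
binary tree on `n` leaves, bijectively labeled `0, 1, ..., n-1`. -/
def IsRBT (n : ℕ) (T : BTree) : Prop :=
  Canonical T ∧ leafMultiset T = Multiset.range n

/-- Number of leaves. -/
def numLeaves : BTree → ℕ
  | leaf _ => 1
  | node l r => numLeaves l + numLeaves r

/-- Delete the leaf labeled `i` (together with its parent); return the label of
its sister node together with the remaining tree. -/
def deleteLeaf (i : ℕ) : BTree → Option (ℤ × BTree)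
  | leaf _ => none
  | node l r =>
    if l = leaf i then some (nodeLabel r, r)
    else if r = leaf i then some (nodeLabel l, l)
    else
      match deleteLeaf i l with
      | some (a, l') => some (a, node l' r)
      | none =>
        match deleteLeaf i r with
        | some (a, r') => some (a, node l r')
        | none => none

/-- Deconstruct a tree by removing leaves `m, m-1, ..., 1` in reverse order,
recording the (leaf or canonical internal) label of the sister of each removed leaf. -/
def olaEncodeAux : ℕ → BTree → List ℤ
  | 0, _ => []
  | m + 1, T =>
    match deleteLeaf (m + 1) T with
    | some (a, T') => olaEncodeAux m T' ++ [a]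
    | none => []

/-- The OLA (ordered leaf attachment) encoding `(a_1, ..., a_{n-1})` of a tree on
`n` leaves: `a_i` is the label of the node that is the sister of leaf `i` at the
step when leaf `i` is attached. -/
def olaEncode (T : BTree) : List ℤ := olaEncodeAux (numLeaves T - 1) T

/-- Attach a new leaf labeled `i` as the sister of the node whose label is `a`
(subdividing that node's parent edge). -/
def attachAt (a : ℤ) (i : ℕ) : BTree → BTree
  | leaf j => if (j : ℤ) = a then node (leaf j) (leaf i) else leaf j
  | node l r =>
    if nodeLabel (node l r) = a then node (node l r) (leaf i)
    else node (attachAt a i l) (attachAt a i r)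

/-- Helper for OLA decoding: attach leaves `i, i+1, ...` at the recorded labels. -/
def olaDecodeAux : BTree → ℕ → List ℤ → BTree
  | T, _, [] => T
  | T, i, a :: rest => olaDecodeAux (attachAt a i T) (i + 1) rest

/-- The OLA decoding: starting from the single leaf `0`, attach leaf `i` as the
sister of the node labeled `a_i`, for `i = 1, ..., n-1`. -/
def olaDecode (v : List ℤ) : BTree := olaDecodeAux (leaf 0) 1 v

end BTree

/-- `ValidCode v` : membership of `v = (a_1, ..., a_m)` in `C_m`, i.e. the entry
`a_i` (at list index `i - 1`) satisfies `-i < a_i < i`. -/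
def ValidCode (v : List ℤ) : Prop :=
  ∀ i : Fin v.length, -((i : ℤ) + 1) < v.get i ∧ v.get i < (i : ℤ) + 1

/-- The OLA distance: the Hamming distance between the OLA encodings. -/
def olaDist (T T' : BTree) : ℕ :=
  ((BTree.olaEncode T).zip (BTree.olaEncode T')).countP fun p => decide (p.1 ≠ p.2)

/-- One-hole contexts, marking the position of a subtree/edge in a tree. -/
inductive Ctx : Type
  | hole : Ctx
  | left : Ctx → BTree → Ctx
  | right : BTree → Ctx → Ctx
  deriving DecidableEq

/-- Fill the hole of a context with a tree. -/
def Ctx.fill : Ctx → BTree → BTree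
  | .hole, T => T
  | .left c r, T => BTree.node (Ctx.fill c T) r
  | .right l c, T => BTree.node l (Ctx.fill c T)

/-- Composition of contexts: `(c.comp d).fill X = c.fill (d.fill X)`. -/
def Ctx.comp : Ctx → Ctx → Ctx
  | .hole, d => d
  | .left c r, d => .left (Ctx.comp c d) r
  | .right l c, d => .right l (Ctx.comp c d)

/-- Equality of ordered binary trees as *unordered* trees (children may be swapped
at every internal node). -/
def TreeEquiv : BTree → BTree → Prop
  | .leaf i, .leaf j => i = j
  | .node l r, .node l' r' =>
      (TreeEquiv l l' ∧ TreeEquiv r r') ∨ (TreeEquiv l r' ∧ TreeEquiv r l')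
  | _, _ => False

/-- `T'` is obtained from `T` by a single NNI move: contract an internal edge
(the edge above the subtree `node A B`) and re-resolve the resulting degree-4
node in one of the two other possible ways (unordered). -/
def IsNNIMove (T T' : BTree) : Prop :=
  ∃ (c : Ctx) (A B C : BTree),
    TreeEquiv T (Ctx.fill c (BTree.node (BTree.node A B) C)) ∧
    TreeEquiv T' (Ctx.fill c (BTree.node (BTree.node A C) B))

/-- `T'` is obtained from `T` by a single rooted SPR move: prune the subtree `S`
(suppressing the resulting degree-2 node) and regraft it by subdividing an edge
of the remaining tree. -/
def IsSPRMove (T T' : BTree) : Prop :=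
  ∃ (S : BTree) (c c' : Ctx) (X Y : BTree),
    TreeEquiv T (Ctx.fill c (BTree.node S X)) ∧
    Ctx.fill c X = Ctx.fill c' Y ∧
    TreeEquiv T' (Ctx.fill c' (BTree.node S Y))

/-- The multiset of canonical labels of the internal nodes of a tree. -/
def internalLabels : BTree → Multiset ℤ
  | .leaf _ => 0
  | .node l r => BTree.nodeLabel (BTree.node l r) ::ₘ (internalLabels l + internalLabels r)

/-- `prune k T` : delete all leaves with label `≥ k` and suppress the resulting
degree-2 nodes (`none` if no leaf survives). -/
def prune (k : ℕ) : BTree → Option BTree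
  | .leaf j => if j < k then some (.leaf j) else none
  | .node l r =>
    match prune k l, prune k r with
    | some l', some r' => some (.node l' r')
    | some l', none => some l'
    | none, some r' => some r'
    | none, none => none


namespace BTree

/-- All node labels of a tree (leaf labels and canonical internal labels). -/
def allLabels : BTree → Multiset ℤ
  | leaf j => {(j : ℤ)}
  | node l r => nodeLabel (node l r) ::ₘ (allLabels l + allLabels r)

lemma minLeaf_mem : ∀ T : BTree, T.minLeaf ∈ T.leafMultiset
  | leaf j => by simp [leafMultiset, minLeaf]
  | node l r => by
      simp only [leafMultiset, minLeaf, Multiset.mem_add]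
      rcases le_total l.minLeaf r.minLeaf with h | h
      · rw [min_eq_left h]; exact Or.inl (minLeaf_mem l)
      · rw [min_eq_right h]; exact Or.inr (minLeaf_mem r)

lemma leafMultiset_ne_zero (T : BTree) : T.leafMultiset ≠ 0 :=
  fun h => absurd (minLeaf_mem T) (by simp [h])

lemma minLeaf_le : ∀ {T : BTree} {j : ℕ}, j ∈ T.leafMultiset → T.minLeaf ≤ j
  | leaf i, j, h => by simp [leafMultiset] at h; simp [minLeaf, h]
  | node l r, j, h => by
      simp only [leafMultiset, Multiset.mem_add] at h
      rcases h with h | h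
      · exact le_trans (min_le_left _ _) (minLeaf_le h)
      · exact le_trans (min_le_right _ _) (minLeaf_le h)

lemma nodeLabel_mem_allLabels : ∀ T : BTree, T.nodeLabel ∈ allLabels T
  | leaf j => by simp [allLabels, nodeLabel]
  | node l r => by simp [allLabels]

lemma natAbs_mem_of_mem_allLabels :
    ∀ {T : BTree} {a : ℤ}, a ∈ allLabels T → a.natAbs ∈ T.leafMultiset
  | leaf j, a, h => by
      simp [allLabels] at h; simp [h, leafMultiset]
  | node l r, a, h => by
      simp only [allLabels, Multiset.mem_cons, Multiset.mem_add] at h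
      simp only [leafMultiset, Multiset.mem_add]
      rcases h with h | h | h
      · subst h
        rw [nodeLabel, Int.natAbs_neg]
        rcases le_total l.minLeaf r.minLeaf with h | h
        · rw [max_eq_right (Nat.cast_le.mpr h), Int.natAbs_natCast]
          exact Or.inr (minLeaf_mem r)
        · rw [max_eq_left (Nat.cast_le.mpr h), Int.natAbs_natCast]
          exact Or.inl (minLeaf_mem l)
      · exact Or.inl (natAbs_mem_of_mem_allLabels h)
      · exact Or.inr (natAbs_mem_of_mem_allLabels h)

lemma internalLabels_eq :
    ∀ {T : BTree}, T.Canonical →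
      internalLabels T = (T.leafMultiset.erase T.minLeaf).map (fun j : ℕ => -(j : ℤ))
  | leaf j, _ => by simp [internalLabels, leafMultiset, minLeaf]
  | node l r, hc => by
      obtain ⟨hlt, hcl, hcr⟩ := hc
      have hl := internalLabels_eq hcl
      have hr := internalLabels_eq hcr
      have hmin : (node l r).minLeaf = l.minLeaf := min_eq_left hlt.le
      have hlab : nodeLabel (node l r) = -(r.minLeaf : ℤ) := by
        rw [nodeLabel, max_eq_right (Nat.cast_le.mpr hlt.le)]
      have hsplit : (l.leafMultiset + r.leafMultiset).erase l.minLeaf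
          = l.leafMultiset.erase l.minLeaf + r.leafMultiset :=
        Multiset.erase_add_left_pos _ (minLeaf_mem l)
      have hcons : r.leafMultiset = r.minLeaf ::ₘ r.leafMultiset.erase r.minLeaf :=
        (Multiset.cons_erase (minLeaf_mem r)).symm
      rw [internalLabels, hl, hr, hlab]
      show _ = ((leafMultiset (node l r)).erase (minLeaf (node l r))).map _
      rw [hmin, leafMultiset, hsplit]
      conv_rhs => rw [hcons]
      simp only [Multiset.map_add, Multiset.map_cons]
      rw [Multiset.add_cons]

lemma allLabels_eq :
    ∀ T : BTree, allLabels T = T.leafMultiset.map (fun j : ℕ => (j : ℤ)) + internalLabels T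
  | leaf j => by simp [allLabels, leafMultiset, internalLabels]
  | node l r => by
      rw [allLabels, allLabels_eq l, allLabels_eq r]
      show _ = (leafMultiset (node l r)).map _ + internalLabels (node l r)
      rw [leafMultiset, internalLabels, Multiset.map_add]
      rw [Multiset.add_cons]
      abel_nf

lemma deleteLeaf_eq_none : ∀ {T : BTree} {i : ℕ}, i ∉ T.leafMultiset → deleteLeaf i T = none
  | leaf j, i, _ => rfl
  | node l r, i, h => by
      simp only [leafMultiset, Multiset.mem_add, not_or] at h
      have hl : l ≠ leaf i := by rintro rfl; exact h.1 (by simp [leafMultiset])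
      have hr : r ≠ leaf i := by rintro rfl; exact h.2 (by simp [leafMultiset])
      rw [deleteLeaf, if_neg hl, if_neg hr, deleteLeaf_eq_none h.1, deleteLeaf_eq_none h.2]

lemma attachAt_eq_self :
    ∀ {T : BTree} {a : ℤ} {i : ℕ}, a ∉ allLabels T → attachAt a i T = T
  | leaf j, a, i, h => by
      simp only [allLabels, Multiset.mem_singleton] at h
      rw [attachAt, if_neg (Ne.symm h)]
  | node l r, a, i, h => by
      simp only [allLabels, Multiset.mem_cons, Multiset.mem_add, not_or] at h
      rw [attachAt, if_neg (Ne.symm h.1), attachAt_eq_self h.2.1, attachAt_eq_self h.2.2]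

lemma attachAt_ne_leaf :
    ∀ {T : BTree} {a : ℤ} {n : ℕ}, n ∉ T.leafMultiset → attachAt a n T ≠ leaf n
  | leaf j, a, n, h => by
      simp only [leafMultiset, Multiset.mem_singleton] at h
      rw [attachAt]
      split <;> simp [Ne.symm h]
  | node l r, a, n, _ => by
      rw [attachAt]; split <;> simp

lemma ne_leaf_of_notMem {T : BTree} {n : ℕ} (h : n ∉ T.leafMultiset) : T ≠ leaf n := by
  rintro rfl; exact h (by simp [leafMultiset])

lemma count_allLabels_node (a : ℤ) (l r : BTree) :
    (allLabels (node l r)).count a =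
      (if a = nodeLabel (node l r) then 1 else 0) + (allLabels l).count a + (allLabels r).count a := by
  simp only [allLabels, Multiset.count_cons, Multiset.count_add]
  split <;> omega

lemma attach_props :
    ∀ {T : BTree} {a : ℤ} {n : ℕ}, T.Canonical → (∀ j ∈ T.leafMultiset, j < n) →
      (allLabels T).count a = 1 →
      (attachAt a n T).Canonical ∧ (attachAt a n T).leafMultiset = n ::ₘ T.leafMultiset
        ∧ (attachAt a n T).minLeaf = T.minLeaf
  | leaf j, a, n, _, hlt, hcount => by
      have hj : j < n := hlt j (by simp [leafMultiset])
      have ha : ((j : ℤ) = a) := by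
        simp only [allLabels, Multiset.count_singleton] at hcount
        by_cases h : a = (j : ℤ)
        · exact h.symm
        · rw [if_neg h] at hcount; omega
      rw [attachAt, if_pos ha]
      refine ⟨⟨by simpa [minLeaf] using hj, trivial, trivial⟩, ?_, ?_⟩
      · show leafMultiset (leaf j) + leafMultiset (leaf n) = n ::ₘ leafMultiset (leaf j)
        rw [add_comm]
        show leafMultiset (leaf n) + _ = _
        rw [leafMultiset, Multiset.singleton_add]
      · show min (minLeaf (leaf j)) (minLeaf (leaf n)) = _
        simp only [minLeaf]
        exact min_eq_left hj.le
  | node l r, a, n, hc, hlt, hcount => by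
      obtain ⟨hlr, hcl, hcr⟩ := hc
      have hltl : ∀ j ∈ l.leafMultiset, j < n := fun j hj =>
        hlt j (by simp [leafMultiset, hj])
      have hltr : ∀ j ∈ r.leafMultiset, j < n := fun j hj =>
        hlt j (by simp [leafMultiset, hj])
      have hminn : (node l r).minLeaf < n := hlt _ (minLeaf_mem _)
      rw [count_allLabels_node] at hcount
      by_cases ha : a = nodeLabel (node l r)
      · rw [attachAt, if_pos ha.symm]
        refine ⟨⟨?_, ⟨hlr, hcl, hcr⟩, trivial⟩, ?_, ?_⟩
        · simpa [minLeaf] using hminn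
        · show leafMultiset (node l r) + leafMultiset (leaf n) = n ::ₘ leafMultiset (node l r)
          rw [add_comm]
          show leafMultiset (leaf n) + _ = _
          rw [leafMultiset, Multiset.singleton_add]
        · show min (minLeaf (node l r)) (minLeaf (leaf n)) = _
          exact min_eq_left (le_of_lt (by simpa [minLeaf] using hminn))
      · rw [if_neg ha] at hcount
        have hne : nodeLabel (node l r) ≠ a := Ne.symm ha
        rw [attachAt, if_neg hne]
        rcases Nat.eq_zero_or_pos ((allLabels l).count a) with h0 | hpos
        · -- a is in r
          have hcr1 : (allLabels r).count a = 1 := by omega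
          have hal : a ∉ allLabels l := by
            rw [← Multiset.count_pos] at *; omega
          rw [attachAt_eq_self hal]
          obtain ⟨c1, c2, c3⟩ := attach_props hcr hltr hcr1
          refine ⟨⟨by rw [c3]; exact hlr, hcl, c1⟩, ?_, ?_⟩
          · show l.leafMultiset + (attachAt a n r).leafMultiset = _
            rw [c2]
            show _ = n ::ₘ (l.leafMultiset + r.leafMultiset)
            rw [Multiset.add_cons]
          · show min l.minLeaf (attachAt a n r).minLeaf = _
            rw [c3]; rfl
        · -- a is in l
          have hcl1 : (allLabels l).count a = 1 := by omega
          have har : a ∉ allLabels r := by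
            rw [← Multiset.count_pos] at *; omega
          rw [attachAt_eq_self har]
          obtain ⟨c1, c2, c3⟩ := attach_props hcl hltl hcl1
          refine ⟨⟨by rw [c3]; exact hlr, c1, hcr⟩, ?_, ?_⟩
          · show (attachAt a n l).leafMultiset + r.leafMultiset = _
            rw [c2]
            show _ = n ::ₘ (l.leafMultiset + r.leafMultiset)
            rw [Multiset.cons_add]
          · show min (attachAt a n l).minLeaf r.minLeaf = _
            rw [c3]; rfl

lemma deleteLeaf_attachAt :
    ∀ {T : BTree} {a : ℤ} {n : ℕ}, n ∉ T.leafMultiset →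
      (allLabels T).count a = 1 →
      deleteLeaf n (attachAt a n T) = some (a, T)
  | leaf j, a, n, hn, hcount => by
      have hjn : j ≠ n := by
        simp only [leafMultiset, Multiset.mem_singleton] at hn; exact fun h => hn h.symm
      have ha : ((j : ℤ) = a) := by
        simp only [allLabels, Multiset.count_singleton] at hcount
        by_cases h : a = (j : ℤ)
        · exact h.symm
        · rw [if_neg h] at hcount; omega
      rw [attachAt, if_pos ha, deleteLeaf, if_neg (by simp [hjn]), if_pos rfl]
      simp [nodeLabel, ha]
  | node l r, a, n, hn, hcount => by
      simp only [leafMultiset, Multiset.mem_add, not_or] at hn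
      obtain ⟨hnl, hnr⟩ := hn
      rw [count_allLabels_node] at hcount
      by_cases ha : a = nodeLabel (node l r)
      · rw [attachAt, if_pos ha.symm, deleteLeaf, if_neg (by simp), if_pos rfl, ha]
      · rw [if_neg ha] at hcount
        rw [attachAt, if_neg (Ne.symm ha)]
        rcases Nat.eq_zero_or_pos ((allLabels l).count a) with h0 | hpos
        · have hcr1 : (allLabels r).count a = 1 := by omega
          have hal : a ∉ allLabels l := by
            rw [← Multiset.count_pos] at *; omega
          rw [attachAt_eq_self hal]
          have ih := deleteLeaf_attachAt hnr hcr1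
          rw [deleteLeaf, if_neg (ne_leaf_of_notMem hnl),
            if_neg (attachAt_ne_leaf hnr), deleteLeaf_eq_none hnl, ih]
        · have hcl1 : (allLabels l).count a = 1 := by omega
          have har : a ∉ allLabels r := by
            rw [← Multiset.count_pos] at *; omega
          rw [attachAt_eq_self har]
          have ih := deleteLeaf_attachAt hnl hcl1
          rw [deleteLeaf, if_neg (attachAt_ne_leaf hnl),
            if_neg (ne_leaf_of_notMem hnr), ih]

lemma notMem_allLabels_of_disjoint {X Y : BTree} {a : ℤ}
    (h : a ∈ allLabels X)
    (hd : ∀ j, j ∈ X.leafMultiset → j ∈ Y.leafMultiset → False) :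
    a ∉ allLabels Y := fun hy =>
  hd a.natAbs (natAbs_mem_of_mem_allLabels h) (natAbs_mem_of_mem_allLabels hy)

lemma neg_minLeaf_notMem {T : BTree} (hc : T.Canonical) (hnd : T.leafMultiset.Nodup)
    (hpos : 0 < T.minLeaf) : -(T.minLeaf : ℤ) ∉ allLabels T := by
  intro h
  rw [allLabels_eq, Multiset.mem_add] at h
  rcases h with h | h
  · obtain ⟨j, _, hj⟩ := Multiset.mem_map.mp h
    omega
  · rw [internalLabels_eq hc] at h
    obtain ⟨j, hj, hj2⟩ := Multiset.mem_map.mp h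
    have : j = T.minLeaf := by omega
    subst this
    exact hnd.notMem_erase hj

lemma delete_props :
    ∀ {T : BTree} {n : ℕ}, T.Canonical → T.leafMultiset.Nodup →
      n ∈ T.leafMultiset → (∀ j ∈ T.leafMultiset, j ≤ n) → T ≠ leaf n →
      ∃ a T', deleteLeaf n T = some (a, T') ∧
        T'.Canonical ∧ T'.leafMultiset = T.leafMultiset.erase n ∧
        T'.minLeaf = T.minLeaf ∧ a ∈ allLabels T' ∧ attachAt a n T' = T
  | leaf j, n, _, _, hmem, _, hne => by
      simp only [leafMultiset, Multiset.mem_singleton] at hmem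
      exact absurd (by rw [hmem]) hne
  | node l r, n, hc, hnd, hmem, hmax, _ => by
      obtain ⟨hlr, hcl, hcr⟩ := hc
      have hnd' := hnd
      rw [show (node l r).leafMultiset = l.leafMultiset + r.leafMultiset from rfl,
        Multiset.nodup_add] at hnd'
      obtain ⟨hndl, hndr, hdisj⟩ := hnd'
      have hdisj' : ∀ j, j ∈ l.leafMultiset → j ∈ r.leafMultiset → False := fun j h1 h2 =>
        Multiset.disjoint_left.mp hdisj h1 h2
      have hmaxl : ∀ j ∈ l.leafMultiset, j ≤ n := fun j hj =>
        hmax j (by simp [leafMultiset, hj])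
      have hmaxr : ∀ j ∈ r.leafMultiset, j ≤ n := fun j hj =>
        hmax j (by simp [leafMultiset, hj])
      have hminrn : r.minLeaf ≤ n := hmaxr _ (minLeaf_mem r)
      have hlneq : l ≠ leaf n := by
        rintro rfl
        simp only [minLeaf] at hlr
        omega
      by_cases hreq : r = leaf n
      · subst hreq
        refine ⟨nodeLabel l, l, ?_, hcl, ?_, ?_, nodeLabel_mem_allLabels l, ?_⟩
        · rw [deleteLeaf, if_neg hlneq, if_pos rfl]
        · show l.leafMultiset = (l.leafMultiset + leafMultiset (leaf n)).erase n
          rw [leafMultiset, add_comm, Multiset.singleton_add, Multiset.erase_cons_head]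
        · show l.minLeaf = min l.minLeaf (minLeaf (leaf n))
          exact (min_eq_left (hmaxl _ (minLeaf_mem l))).symm
        · cases l with
          | leaf j => rw [attachAt, if_pos (show (j : ℤ) = nodeLabel (leaf j) from rfl)]
          | node l1 l2 => rw [attachAt, if_pos rfl]
      · rcases Multiset.mem_add.mp hmem with hml | hmr
        · -- n is in the left subtree
          have hnr : n ∉ r.leafMultiset := fun h => hdisj' n hml h
          have hrneq : r ≠ leaf n := ne_leaf_of_notMem hnr
          obtain ⟨a, l', hdel, hc', hlm', hmin', hmem'', hatt⟩ :=
            delete_props hcl hndl hml hmaxl hlneq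
          have hroot : nodeLabel (node l' r) ≠ a := by
            intro h
            have h1 : a.natAbs ∈ l.leafMultiset :=
              Multiset.mem_of_mem_erase (hlm' ▸ natAbs_mem_of_mem_allLabels hmem'')
            have h2 : a = -(r.minLeaf : ℤ) := by
              rw [← h, nodeLabel, hmin', max_eq_right (Nat.cast_le.mpr hlr.le)]
            have h3 : a.natAbs = r.minLeaf := by omega
            exact hdisj' _ (h3 ▸ h1) (minLeaf_mem r)
          have hanr : a ∉ allLabels r := by
            intro h
            have h1 : a.natAbs ∈ l.leafMultiset :=
              Multiset.mem_of_mem_erase (hlm' ▸ natAbs_mem_of_mem_allLabels hmem'')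
            exact hdisj' _ h1 (natAbs_mem_of_mem_allLabels h)
          refine ⟨a, node l' r, ?_, ⟨hmin' ▸ hlr, hc', hcr⟩, ?_, ?_, ?_, ?_⟩
          · simp only [deleteLeaf, if_neg hlneq, if_neg hrneq, hdel]
          · show l'.leafMultiset + r.leafMultiset = (l.leafMultiset + r.leafMultiset).erase n
            rw [hlm', Multiset.erase_add_left_pos _ hml]
          · show min l'.minLeaf r.minLeaf = min l.minLeaf r.minLeaf
            rw [hmin']
          · simp only [allLabels, Multiset.mem_cons, Multiset.mem_add]
            exact Or.inr (Or.inl hmem'')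
          · rw [attachAt, if_neg hroot, hatt, attachAt_eq_self hanr]
        · -- n is in the right subtree
          have hnl : n ∉ l.leafMultiset := fun h => hdisj' n h hmr
          obtain ⟨a, r', hdel, hc', hlm', hmin', hmem'', hatt⟩ :=
            delete_props hcr hndr hmr hmaxr hreq
          have hminr'pos : 0 < r'.minLeaf := by
            rw [hmin']; omega
          have hndr' : r'.leafMultiset.Nodup := hlm' ▸ hndr.erase n
          have hroot : nodeLabel (node l r') ≠ a := by
            intro h
            have h2 : a = -(r'.minLeaf : ℤ) := by
              rw [← h, nodeLabel, max_eq_right (Nat.cast_le.mpr (hmin' ▸ hlr).le)]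
            exact neg_minLeaf_notMem hc' hndr' hminr'pos (h2 ▸ hmem'')
          have hanl : a ∉ allLabels l := by
            intro h
            have h1 : a.natAbs ∈ r.leafMultiset :=
              Multiset.mem_of_mem_erase (hlm' ▸ natAbs_mem_of_mem_allLabels hmem'')
            exact hdisj' _ (natAbs_mem_of_mem_allLabels h) h1
          refine ⟨a, node l r', ?_, ⟨hmin' ▸ hlr, hcl, hc'⟩, ?_, ?_, ?_, ?_⟩
          · simp only [deleteLeaf, if_neg hlneq, if_neg hreq, deleteLeaf_eq_none hnl, hdel]
          · show l.leafMultiset + r'.leafMultiset = (l.leafMultiset + r.leafMultiset).erase n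
            rw [hlm', Multiset.erase_add_right_pos _ hmr]
          · show min l.minLeaf r'.minLeaf = min l.minLeaf r.minLeaf
            rw [hmin']
          · simp only [allLabels, Multiset.mem_cons, Multiset.mem_add]
            exact Or.inr (Or.inr hmem'')
          · rw [attachAt, if_neg hroot, attachAt_eq_self hanl, hatt]

end BTree

namespace BTree

lemma minLeaf_rbt {n : ℕ} {T : BTree} (h : IsRBT n T) (hn : 1 ≤ n) : T.minLeaf = 0 := by
  have h0 : 0 ∈ T.leafMultiset := by rw [h.2, Multiset.mem_range]; omega
  have := minLeaf_le h0; omega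

lemma allLabels_rbt {n : ℕ} {T : BTree} (h : IsRBT n T) (hn : 1 ≤ n) :
    allLabels T = (Multiset.range n).map (fun j : ℕ => (j : ℤ))
      + ((Multiset.range n).erase 0).map (fun j : ℕ => -(j : ℤ)) := by
  rw [allLabels_eq, internalLabels_eq h.1, h.2, minLeaf_rbt h hn]

lemma mem_allLabels_rbt {n : ℕ} {T : BTree} (h : IsRBT n T) (hn : 1 ≤ n) (a : ℤ) :
    a ∈ allLabels T ↔ -(n : ℤ) < a ∧ a < n := by
  rw [allLabels_rbt h hn, Multiset.mem_add, Multiset.mem_map, Multiset.mem_map]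
  constructor
  · rintro (⟨j, hj, hja⟩ | ⟨j, hj, hja⟩)
    · rw [Multiset.mem_range] at hj; omega
    · have hj1 : j ∈ Multiset.range n := Multiset.mem_of_mem_erase hj
      have hj0 : j ≠ 0 := by rintro rfl; exact (Multiset.nodup_range n).notMem_erase hj
      rw [Multiset.mem_range] at hj1
      omega
  · rintro ⟨h1, h2⟩
    rcases le_or_gt 0 a with hp | hp
    · exact Or.inl ⟨a.toNat, by rw [Multiset.mem_range]; omega, by omega⟩
    · refine Or.inr ⟨(-a).toNat, ?_, by omega⟩
      rw [Multiset.mem_erase_of_ne (by omega), Multiset.mem_range]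
      omega

lemma allLabels_nodup_rbt {n : ℕ} {T : BTree} (h : IsRBT n T) (hn : 1 ≤ n) :
    (allLabels T).Nodup := by
  rw [allLabels_rbt h hn, Multiset.nodup_add]
  refine ⟨(Multiset.nodup_range n).map (fun x y hxy => by omega),
    ((Multiset.nodup_range n).erase 0).map (fun x y hxy => by omega), ?_⟩
  rw [Multiset.disjoint_left]
  intro a haj hak
  obtain ⟨j, hj, hja⟩ := Multiset.mem_map.mp haj
  obtain ⟨k, hk, hk2⟩ := Multiset.mem_map.mp hak
  have hk1 : k ∈ Multiset.range n := Multiset.mem_of_mem_erase hk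
  have hk0 : k ≠ 0 := by rintro rfl; exact (Multiset.nodup_range n).notMem_erase hk
  omega

lemma count_one_rbt {n : ℕ} {T : BTree} (h : IsRBT n T) (hn : 1 ≤ n) {a : ℤ}
    (ha : -(n : ℤ) < a ∧ a < n) : (allLabels T).count a = 1 :=
  Multiset.count_eq_one_of_mem (allLabels_nodup_rbt h hn)
    ((mem_allLabels_rbt h hn a).mpr ha)

lemma isRBT_attach {n : ℕ} {T : BTree} (h : IsRBT n T) (hn : 1 ≤ n) {a : ℤ}
    (ha : -(n : ℤ) < a ∧ a < n) : IsRBT (n + 1) (attachAt a n T) := by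
  have hcount := count_one_rbt h hn ha
  have hlt : ∀ j ∈ T.leafMultiset, j < n := by
    rw [h.2]; intro j hj; exact Multiset.mem_range.mp hj
  obtain ⟨c1, c2, _⟩ := attach_props h.1 hlt hcount
  exact ⟨c1, by rw [c2, h.2, Multiset.range_succ]⟩

lemma card_step (n : ℕ) (hn : 1 ≤ n) :
    Nat.card {T : BTree // IsRBT (n + 1) T}
      = Nat.card {T : BTree // IsRBT n T} * (2 * n - 1) := by
  classical
  set A := (Finset.Ioo (-(n : ℤ)) (n : ℤ)) with hA
  have key : ∀ (T : {T : BTree // IsRBT n T}) (a : ↥A), IsRBT (n + 1) (attachAt a.1 n T.1) := by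
    intro T a
    have := Finset.mem_Ioo.mp a.2
    exact isRBT_attach T.2 hn this
  let Ψ : {T : BTree // IsRBT n T} × ↥A → {T : BTree // IsRBT (n + 1) T} :=
    fun p => ⟨attachAt p.2.1 n p.1.1, key p.1 p.2⟩
  have hdel : ∀ p : {T : BTree // IsRBT n T} × ↥A,
      deleteLeaf n (Ψ p).1 = some (p.2.1, p.1.1) := by
    rintro ⟨T, a⟩
    apply deleteLeaf_attachAt
    · rw [T.2.2, Multiset.mem_range]; omega
    · exact count_one_rbt T.2 hn (Finset.mem_Ioo.mp a.2)
  have hbij : Function.Bijective Ψ := by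
    constructor
    · intro p q hpq
      have h1 := hdel p
      have h2 := hdel q
      have hv : (Ψ p).1 = (Ψ q).1 := congrArg Subtype.val hpq
      rw [hv, h2] at h1
      injection h1 with h1
      injection h1 with ha hT
      obtain ⟨⟨T, hT1⟩, ⟨a, ha1⟩⟩ := p
      obtain ⟨⟨T', hT2⟩, ⟨a', ha2⟩⟩ := q
      simp only at ha hT
      simp only [Prod.mk.injEq, Subtype.mk.injEq]
      exact ⟨hT.symm, ha.symm⟩
    · rintro ⟨T, hT⟩
      have hnd : T.leafMultiset.Nodup := by rw [hT.2]; exact Multiset.nodup_range _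
      have hmem : n ∈ T.leafMultiset := by rw [hT.2, Multiset.mem_range]; omega
      have hmax : ∀ j ∈ T.leafMultiset, j ≤ n := by
        rw [hT.2]; intro j hj; have := Multiset.mem_range.mp hj; omega
      have hne : T ≠ leaf n := by
        rintro rfl
        have h0 : (0 : ℕ) ∈ leafMultiset (leaf n) := by
          rw [hT.2, Multiset.mem_range]; omega
        simp only [leafMultiset, Multiset.mem_singleton] at h0
        omega
      obtain ⟨a, T', hdel', hc', hlm', _, hmem'', hatt⟩ :=
        delete_props hT.1 hnd hmem hmax hne
      have hT' : IsRBT n T' :=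
        ⟨hc', by rw [hlm', hT.2, Multiset.range_succ, Multiset.erase_cons_head]⟩
      have haio : a ∈ A := by
        rw [hA, Finset.mem_Ioo]
        exact (mem_allLabels_rbt hT' hn a).mp hmem''
      exact ⟨⟨⟨T', hT'⟩, ⟨a, haio⟩⟩, Subtype.ext hatt⟩
  rw [← Nat.card_eq_of_bijective Ψ hbij, Nat.card_prod]
  congr 1
  rw [Nat.card_eq_finsetCard, hA, Int.card_Ioo]
  omega

lemma card_base : Nat.card {T : BTree // IsRBT 1 T} = 1 := by
  have huniq : ∀ T : BTree, IsRBT 1 T → T = leaf 0 := by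
    intro T hT
    cases T with
    | leaf j =>
        have h := hT.2
        rw [show leafMultiset (leaf j) = {j} from rfl, Multiset.range_succ,
          Multiset.range_zero, Multiset.cons_zero] at h
        rw [Multiset.singleton_inj.mp h]
    | node l r =>
        exfalso
        have hcard := congrArg Multiset.card hT.2
        rw [show leafMultiset (node l r) = l.leafMultiset + r.leafMultiset from rfl,
          Multiset.card_add, Multiset.card_range] at hcard
        have h1 := Multiset.card_pos.mpr (leafMultiset_ne_zero l)
        have h2 := Multiset.card_pos.mpr (leafMultiset_ne_zero r)
        omega
  have : Unique {T : BTree // IsRBT 1 T} :=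
    { default := ⟨leaf 0, trivial, by decide⟩
      uniq := fun ⟨T, hT⟩ => Subtype.ext (huniq T hT) }
  exact Nat.card_unique

lemma card_aux : ∀ m : ℕ,
    Nat.card {T : BTree // IsRBT (m + 1) T} = ∏ i ∈ Finset.range m, (2 * i + 1)
  | 0 => by simpa using card_base
  | m + 1 => by
      rw [card_step (m + 1) (by omega), card_aux m, Finset.prod_range_succ,
        show 2 * (m + 1) - 1 = 2 * m + 1 from by omega]

end BTree

/-- For every `n ≥ 2`, the number of leaf-ordered rooted binary
trees on `n` leaves (each such unordered tree being represented by its unique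
canonical ordered representative) equals the double factorial
`(2n-3)!! = ∏_{i=1}^{n-1} (2i - 1)`. -/
theorem card_rbt (n : ℕ) (hn : 2 ≤ n) :
    Nat.card {T : BTree // BTree.IsRBT n T} =
      ∏ i ∈ Finset.range (n - 1), (2 * i + 1) := by
  obtain ⟨m, rfl⟩ : ∃ m, n = m + 1 + 1 := ⟨n - 2, by omega⟩
  simpa using BTree.card_aux (m + 1)
end

section
/- Let T be a leaf-ordered rooted binary tree on n leaves labeled {0, ..., n−1} (n ≥ 2), and let T⁺ be a tree on n+1 leaves obtained from T by subdividing an edge of T with a new internal node p and attaching a new leaf labeled n as a child of p. Then every internal node of T, viewed as an internal node of T⁺ under the natural identification, has the same canonical label in T⁺ as it does in T. -/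

lemma minLeaf_mem (T : BTree) : T.minLeaf ∈ T.leafMultiset := by
  induction T with
  | leaf j => simp [BTree.minLeaf, BTree.leafMultiset]
  | node l r ihl ihr =>
    simp only [BTree.minLeaf, BTree.leafMultiset, Multiset.mem_add]
    rcases min_cases l.minLeaf r.minLeaf with ⟨h, _⟩ | ⟨h, _⟩ <;> rw [h] <;> tauto

lemma mem_fill {a : ℕ} (c : Ctx) {Y : BTree} (h : a ∈ Y.leafMultiset) :
    a ∈ (Ctx.fill c Y).leafMultiset := by
  induction c with
  | hole => exact h
  | left c r ih => simp only [Ctx.fill, BTree.leafMultiset, Multiset.mem_add]; exact Or.inl ih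
  | right l c ih => simp only [Ctx.fill, BTree.leafMultiset, Multiset.mem_add]; exact Or.inr ih

lemma minLeaf_fill (c : Ctx) {Y Y' : BTree} (h : Y'.minLeaf = Y.minLeaf) :
    (Ctx.fill c Y').minLeaf = (Ctx.fill c Y).minLeaf := by
  induction c with
  | hole => exact h
  | left c r ih => simp [Ctx.fill, BTree.minLeaf, ih]
  | right l c ih => simp [Ctx.fill, BTree.minLeaf, ih]

lemma internalLabels_fill (c : Ctx) {Y Y' : BTree} (hm : Y'.minLeaf = Y.minLeaf)
    (a : ℤ) (hi : internalLabels Y' = a ::ₘ internalLabels Y) :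
    internalLabels (Ctx.fill c Y') = a ::ₘ internalLabels (Ctx.fill c Y) := by
  induction c with
  | hole => exact hi
  | left c r ih =>
    simp only [Ctx.fill, internalLabels, BTree.nodeLabel, minLeaf_fill c hm, ih,
      Multiset.cons_add]
    exact Multiset.cons_swap _ _ _
  | right l c ih =>
    simp only [Ctx.fill, internalLabels, BTree.nodeLabel, minLeaf_fill c hm, ih,
      Multiset.add_cons]
    exact Multiset.cons_swap _ _ _

/-- Let `T` be a leaf-ordered rooted binary tree on `n` leaves
(`n ≥ 2`) and let `T⁺ = c.fill (node X (leaf n))` be obtained from `T = c.fill X` by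
subdividing the edge above the subtree `X` with a new internal node `p` and
attaching a new leaf labeled `n` as a child of `p`.  Then every internal node of `T`,
viewed as an internal node of `T⁺` under the natural identification, has the same
canonical label in `T⁺` as in `T`: (1) every proper ancestor of the subdivided edge,
namely the node at position `c'` with subtree `d.fill X` where `c = c'.comp d` and
`d ≠ hole`, keeps its canonical label (all other internal nodes of `T` have a
literally unchanged subtree, hence trivially the same label); equivalently
(2) the multiset of internal canonical labels of `T⁺` is that of `T` together with
the label of the new node `p`. -/
theorem canonical_labels_stable_under_leaf_attach (n : ℕ) (hn : 2 ≤ n)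
    (T : BTree) (hT : BTree.IsRBT n T)
    (c : Ctx) (X : BTree) (hTeq : T = Ctx.fill c X) :
    (∀ (c' d : Ctx), c = Ctx.comp c' d → d ≠ Ctx.hole →
      BTree.nodeLabel (Ctx.fill d (BTree.node X (BTree.leaf n))) =
        BTree.nodeLabel (Ctx.fill d X)) ∧
    internalLabels (Ctx.fill c (BTree.node X (BTree.leaf n))) =
      BTree.nodeLabel (BTree.node X (BTree.leaf n)) ::ₘ internalLabels T := by
  have hmem : X.minLeaf ∈ (Ctx.fill c X).leafMultiset := mem_fill c (minLeaf_mem X)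
  rw [← hTeq, hT.2, Multiset.mem_range] at hmem
  have hmin : (BTree.node X (BTree.leaf n)).minLeaf = X.minLeaf := by
    simp only [BTree.minLeaf]
    exact min_eq_left (le_of_lt hmem)
  constructor
  · intro c' d hcd hd
    cases d with
    | hole => exact absurd rfl hd
    | left d2 r => simp [Ctx.fill, BTree.nodeLabel, minLeaf_fill d2 hmin]
    | right l d2 => simp [Ctx.fill, BTree.nodeLabel, minLeaf_fill d2 hmin]
  · rw [hTeq]
    exact internalLabels_fill c hmin _ (by simp [internalLabels])
end
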